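/- arXiv:1112.5353 — 3 statements merged into one kernel-verified Lean document; each statement's English description precedes it below -/
import Mathlib

section
/- Let Γ be a Fuchsian group and x a future lightlike vector in Minkowski space. Then the origin is an accumulation point of the orbit Γx. -/
open Pointwise

noncomputable section

/-- The Minkowski bilinear form on ℝ^{d+1}. -/
def mink (d : ℕ) (x y : Fin (d+1) → ℝ) : ℝ :=
  (∑ i : Fin d, x i.castSucc * y i.castSucc) - x (Fin.last d) * y (Fin.last d)

/-- The open future cone. -/
def FutureCone (d : ℕ) : Set (Fin (d+1) → ℝ) :=
  {x | mink d x x < 0 ∧ 0 < x (Fin.last d)}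

/-- The hyperboloid model of hyperbolic space. -/
def Hyperboloid (d : ℕ) : Set (Fin (d+1) → ℝ) :=
  {x | mink d x x = -1 ∧ 0 < x (Fin.last d)}

/-- A Fuchsian group: linear isometries of the Minkowski form preserving the future
cone and acting freely cocompactly on the hyperboloid. -/
structure IsFuchsian (d : ℕ)
    (Γ : Subgroup ((Fin (d+1) → ℝ) ≃ₗ[ℝ] (Fin (d+1) → ℝ))) : Prop where
  isom : ∀ γ ∈ Γ, ∀ x y, mink d (γ x) (γ y) = mink d x y
  cone : ∀ γ ∈ Γ, ∀ x ∈ FutureCone d, γ x ∈ FutureCone d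
  free : ∀ γ ∈ Γ, γ ≠ 1 → ∀ x ∈ Hyperboloid d, γ x ≠ x
  cocompact : ∃ C : Set (Fin (d+1) → ℝ), IsCompact C ∧ C ⊆ Hyperboloid d ∧
    ∀ x ∈ Hyperboloid d, ∃ γ ∈ Γ, ∃ c ∈ C, γ c = x

/-- A Γ-convex (Fuchsian convex) body. -/
structure IsFuchsianConvexBody (d : ℕ)
    (Γ : Subgroup ((Fin (d+1) → ℝ) ≃ₗ[ℝ] (Fin (d+1) → ℝ)))
    (K : Set (Fin (d+1) → ℝ)) : Prop where
  nonempty : K.Nonempty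
  isClosed : IsClosed K
  convex : Convex ℝ K
  subset : K ⊆ FutureCone d
  proper : K ≠ FutureCone d
  invariant : ∀ γ ∈ Γ, (⇑γ) '' K = K

/-! Move a point `q` of the hyperboloid far out towards the lightlike ray of `x`, so that
`⟪x, q⟫ = -η` is tiny, and use cocompactness to bring `q` by some `γ ∈ Γ` into a fixed compact
set, where last coordinates are at most `B`. As `γ` is an isometry, `⟪γx, γq⟫ = -η`, and the reverse
Cauchy–Schwarz inequality `y_{d+1} ≤ 2 c_{d+1} |⟪y, c⟫|` for future lightlike `y` and `c` on the
hyperboloid gives `(γx)_{d+1} ≤ 2Bη`. The last coordinate of a lightlike vector dominates its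
sup norm. -/

section

variable {d : ℕ}

lemma mink_comm (x y : Fin (d+1) → ℝ) : mink d x y = mink d y x := by
  simp only [mink, mul_comm]

lemma sum_castSucc_mul_eq (v w : Fin (d+1) → ℝ) :
    ∑ j : Fin d, v j.castSucc * w j.castSucc = mink d v w + v (Fin.last d) * w (Fin.last d) := by
  unfold mink; ring

lemma mink_smul_single_last_add_smul (x y : Fin (d+1) → ℝ) (a b : ℝ) :
    mink d x (a • Pi.single (Fin.last d) 1 + b • y) = b * mink d x y - a * x (Fin.last d) := by
  simp only [mink, Pi.add_apply, Pi.smul_apply, smul_eq_mul, Pi.single_apply,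
    Fin.castSucc_ne_last, if_false, if_true, mul_zero, zero_add]
  simp only [mul_left_comm _ b, ← Finset.mul_sum]
  ring

lemma exists_mem_hyperboloid_mink_eq_neg {x : Fin (d+1) → ℝ}
    (hl : mink d x x = 0) (hxf : 0 < x (Fin.last d)) {η : ℝ} (hη : 0 < η) :
    ∃ q ∈ Hyperboloid d, mink d x q = -η := by
  set xl := x (Fin.last d)
  set α := η / xl
  have hα : 0 < α := div_pos hη hxf
  -- `q = α e_{d+1} + β x` has `⟪q, q⟫ = -α² - 2αβ x_{d+1}`, so this `β` puts `q` on the hyperboloid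
  set β := (1 - α ^ 2) / (2 * α * xl)
  have hαβ : 2 * α * β * xl = 1 - α ^ 2 := by
    simp only [β]; field_simp
  set q := α • Pi.single (Fin.last d) (1:ℝ) + β • x
  have hxq : mink d x q = -(α * xl) := by
    rw [mink_smul_single_last_add_smul, hl]; ring
  have hql : q (Fin.last d) = α + β * xl := by simp [q, xl]
  refine ⟨q, ⟨?_, ?_⟩, ?_⟩
  · rw [mink_smul_single_last_add_smul, mink_comm, hxq, hql]
    linear_combination (-1) * hαβ
  · rw [hql]
    have h : 0 < 2 * α * (α + β * xl) := by
      rw [show 2 * α * (α + β * xl) = 1 + α ^ 2 by linear_combination hαβ]; positivity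
    exact pos_of_mul_pos_right h (by positivity)
  · rw [hxq, div_mul_cancel₀ η hxf.ne']

lemma last_le_of_lightlike_of_mink_self_eq_neg_one {y c : Fin (d+1) → ℝ}
    (hy : mink d y y = 0) (hy₀ : 0 ≤ y (Fin.last d)) (hc : mink d c c = -1) :
    y (Fin.last d) ≤ -(2 * c (Fin.last d) * mink d y c) := by
  have hCS := Finset.sum_mul_sq_le_sq_mul_sq Finset.univ
    (fun j : Fin d => y j.castSucc) (fun j : Fin d => c j.castSucc)
  simp only [sq, sum_castSucc_mul_eq, hy, hc] at hCS
  -- `hCS : (⟪y, c⟫ + y_{d+1} c_{d+1})² ≤ y_{d+1}² (c_{d+1}² - 1)`,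
  -- i.e. `y_{d+1}² + ⟪y, c⟫² ≤ -2 y_{d+1} c_{d+1} ⟪y, c⟫`
  generalize mink d y c = m at hCS ⊢
  generalize y (Fin.last d) = Y at hCS hy₀ ⊢
  rcases hy₀.eq_or_lt with rfl | hY <;> nlinarith [sq_nonneg m]

lemma add_smul_single_last_mem_futureCone {x : Fin (d+1) → ℝ} (hx : mink d x x ≤ 0)
    (hx₀ : 0 ≤ x (Fin.last d)) {s : ℝ} (hs : 0 < s) :
    x + s • Pi.single (Fin.last d) 1 ∈ FutureCone d := by
  unfold FutureCone mink at *
  simp only [Set.mem_ofPred_eq, Pi.add_apply, Pi.smul_apply, ne_eq, Fin.castSucc_ne_last,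
    not_false_eq_true, Pi.single_eq_of_ne, smul_eq_mul, mul_zero, add_zero, Pi.single_eq_same,
    mul_one]
  constructor <;> nlinarith

lemma last_nonneg_of_mapsTo_futureCone (f : (Fin (d+1) → ℝ) →ₗ[ℝ] (Fin (d+1) → ℝ))
    (hf : Set.MapsTo f (FutureCone d) (FutureCone d)) {x : Fin (d+1) → ℝ}
    (hx : mink d x x ≤ 0) (hx₀ : 0 ≤ x (Fin.last d)) : 0 ≤ f x (Fin.last d) := by
  have hlim : Filter.Tendsto (fun s : ℝ => f (x + s • Pi.single (Fin.last d) 1) (Fin.last d))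
      (nhdsWithin 0 (Set.Ioi 0)) (nhds (f x (Fin.last d))) := by
    have hcont : Continuous fun s : ℝ => f (x + s • Pi.single (Fin.last d) 1) (Fin.last d) := by
      fun_prop
    simpa using (hcont.tendsto 0).mono_left nhdsWithin_le_nhds
  refine ge_of_tendsto hlim (eventually_nhdsWithin_of_forall fun s hs => ?_)
  exact (hf (add_smul_single_last_mem_futureCone hx hx₀ hs)).2.le

lemma norm_le_abs_last_of_mink_self_nonpos {x : Fin (d+1) → ℝ} (hx : mink d x x ≤ 0) :
    ‖x‖ ≤ |x (Fin.last d)| := by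
  have hspace : ∑ j : Fin d, x j.castSucc * x j.castSucc ≤ x (Fin.last d) * x (Fin.last d) := by
    unfold mink at hx; linarith
  refine (pi_norm_le_iff_of_nonneg (abs_nonneg _)).2 fun i => ?_
  rw [Real.norm_eq_abs]
  induction i using Fin.lastCases with
  | last => rfl
  | cast j =>
    refine sq_le_sq.1 ?_
    calc x j.castSucc ^ 2 ≤ ∑ k : Fin d, x k.castSucc * x k.castSucc := by
          rw [sq]
          exact Finset.single_le_sum (f := fun k : Fin d => x k.castSucc * x k.castSucc)
            (fun k _ => mul_self_nonneg _) (Finset.mem_univ j)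
      _ ≤ x (Fin.last d) ^ 2 := by rw [sq]; exact hspace

end

lemma IsFuchsian.exists_translate_last_le {d : ℕ}
    {Γ : Subgroup ((Fin (d+1) → ℝ) ≃ₗ[ℝ] (Fin (d+1) → ℝ))} (hΓ : IsFuchsian d Γ) :
    ∃ B > 0, ∀ q ∈ Hyperboloid d, ∃ γ ∈ Γ, γ q ∈ Hyperboloid d ∧ γ q (Fin.last d) ≤ B := by
  obtain ⟨C, hC, hCH, hcover⟩ := hΓ.cocompact
  obtain ⟨B, hB⟩ := hC.bddAbove_image (continuous_apply (Fin.last d)).continuousOn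
  refine ⟨max B 1, by positivity, fun q hq => ?_⟩
  obtain ⟨γ, hγ, c, hc, rfl⟩ := hcover q hq
  refine ⟨γ⁻¹, inv_mem hγ, ?_⟩
  rw [show (γ⁻¹ : (Fin (d+1) → ℝ) ≃ₗ[ℝ] (Fin (d+1) → ℝ)) (γ c) = c from γ.symm_apply_apply c]
  exact ⟨hCH hc, (hB (Set.mem_image_of_mem _ hc)).trans (le_max_left _ _)⟩

theorem stmt7_general (d : ℕ) (Γ : Subgroup ((Fin (d+1) → ℝ) ≃ₗ[ℝ] (Fin (d+1) → ℝ)))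
    (hΓ : IsFuchsian d Γ) (x : Fin (d+1) → ℝ)
    (hl : mink d x x = 0) (hxf : 0 < x (Fin.last d)) :
    ∀ ε : ℝ, 0 < ε → ∃ γ ∈ Γ, γ x ≠ 0 ∧ ‖γ x‖ < ε := by
  intro ε hε
  obtain ⟨B, hB, hbound⟩ := hΓ.exists_translate_last_le
  obtain ⟨q, hq, hxq⟩ :=
    exists_mem_hyperboloid_mink_eq_neg hl hxf (η := ε / (4 * B)) (by positivity)
  obtain ⟨γ, hγ, hγq, hγqB⟩ := hbound q hq
  have hyy : mink d (γ x) (γ x) = 0 := by rw [hΓ.isom γ hγ, hl]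
  have hy₀ : 0 ≤ γ x (Fin.last d) :=
    last_nonneg_of_mapsTo_futureCone γ.toLinearMap (hΓ.cone γ hγ) hl.le hxf.le
  have hyε : γ x (Fin.last d) < ε := calc
    _ ≤ -(2 * γ q (Fin.last d) * mink d (γ x) (γ q)) :=
      last_le_of_lightlike_of_mink_self_eq_neg_one hyy hy₀ hγq.1
    _ = γ q (Fin.last d) * (ε / (2 * B)) := by rw [hΓ.isom γ hγ, hxq]; ring
    _ ≤ B * (ε / (2 * B)) := by gcongr
    _ < ε := by field_simp; linarith
  refine ⟨γ, hγ, γ.map_ne_zero_iff.2 ?_, ?_⟩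
  · rintro rfl
    simp at hxf
  · calc ‖γ x‖ ≤ |γ x (Fin.last d)| := norm_le_abs_last_of_mink_self_nonpos hyy.le
      _ = γ x (Fin.last d) := abs_of_nonneg hy₀
      _ < ε := hyε

/-- For a Fuchsian group Γ and a future lightlike vector x, the origin is an
accumulation point of the orbit Γx. -/
theorem stmt7 (d : ℕ) (Γ : Subgroup ((Fin (d+1) → ℝ) ≃ₗ[ℝ] (Fin (d+1) → ℝ)))
    (hΓ : IsFuchsian d Γ) (x : Fin (d+1) → ℝ)
    (hl : mink d x x = 0) (hx0 : x ≠ 0) (hxf : 0 < x (Fin.last d)) :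
    ∀ ε : ℝ, 0 < ε → ∃ γ ∈ Γ, γ x ≠ 0 ∧ ‖γ x‖ < ε :=
  stmt7_general d Γ hΓ x hl hxf
end
end

section
/- Let K be a Γ-convex body. For any future timelike vector η, the supremum H(η) = sup{⟨x,η⟩₋ : x ∈ K} is finite, attained at a point of K, and negative; consequently every future timelike vector is an inward normal of some support plane of K, and each future timelike vector is the inward normal of exactly one support plane of K. -/
open Pointwise

noncomputable section

-- basic facts
lemma cone_sq_lt (d : ℕ) {x : Fin (d+1) → ℝ} (hx : x ∈ FutureCone d) :
    (∑ i : Fin d, x i.castSucc ^ 2) < x (Fin.last d) ^ 2 := by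
  have h := hx.1
  simp only [mink] at h
  have : ∑ i : Fin d, x i.castSucc ^ 2 = ∑ i : Fin d, x i.castSucc * x i.castSucc := by
    apply Finset.sum_congr rfl; intro i _; ring
  nlinarith [h]

lemma mink_neg (d : ℕ) {x η : Fin (d+1) → ℝ} (hx : x ∈ FutureCone d)
    (hη : η ∈ FutureCone d) : mink d x η < 0 := by
  have hcs := Finset.sum_mul_sq_le_sq_mul_sq Finset.univ
    (fun i : Fin d => x i.castSucc) (fun i : Fin d => η i.castSucc)
  have h1 := cone_sq_lt d hx
  have h2 := cone_sq_lt d hη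
  have hx1 := hx.2
  have hη1 := hη.2
  have hnn : (0:ℝ) ≤ ∑ i : Fin d, x i.castSucc ^ 2 :=
    Finset.sum_nonneg fun i _ => sq_nonneg _
  have hnn2 : (0:ℝ) ≤ ∑ i : Fin d, η i.castSucc ^ 2 :=
    Finset.sum_nonneg fun i _ => sq_nonneg _
  simp only [mink]
  have hAB := mul_lt_mul'' h1 h2 hnn hnn2
  nlinarith [hcs, hAB, mul_pos hx1 hη1]

/-- For a Γ-convex body K and any future timelike η, the supremum of ⟨·,η⟩₋ over K is
attained and negative, so η is the inward normal of exactly one support plane of K. -/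
theorem stmt9 (d : ℕ) (Γ : Subgroup ((Fin (d+1) → ℝ) ≃ₗ[ℝ] (Fin (d+1) → ℝ)))
    (hΓ : IsFuchsian d Γ) (K : Set (Fin (d+1) → ℝ))
    (hK : IsFuchsianConvexBody d Γ K)
    (η : Fin (d+1) → ℝ) (hη : η ∈ FutureCone d) :
    ∃ x ∈ K, (∀ y ∈ K, mink d y η ≤ mink d x η) ∧ mink d x η < 0 ∧
      ∀ x' ∈ K, (∀ y ∈ K, mink d y η ≤ mink d x' η) → mink d x' η = mink d x η := by
  have hKc := hK.isClosed
  have hKs := hK.subset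
  have hKn := hK.nonempty
  obtain ⟨x₀, hx₀⟩ := hKn
  set c := mink d x₀ η with hc
  have hcneg : c < 0 := mink_neg d (hKs hx₀) hη
  -- bound on the last coordinate in the superlevel set
  set s := Real.sqrt (∑ i : Fin d, η i.castSucc ^ 2) with hs
  have hsnn : 0 ≤ s := Real.sqrt_nonneg _
  have hslt : s < η (Fin.last d) := by
    have h2 := cone_sq_lt d hη
    have := Real.sqrt_lt_sqrt (Finset.sum_nonneg fun i _ => sq_nonneg _) h2
    rwa [Real.sqrt_sq hη.2.le] at this
  set M := c / (s - η (Fin.last d)) with hM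
  have hMpos : 0 < M := div_pos_of_neg_of_neg hcneg (by linarith)
  have key : ∀ x ∈ FutureCone d, c ≤ mink d x η →
      x (Fin.last d) ≤ M ∧ ∀ i : Fin (d+1), |x i| ≤ M := by
    intro x hx hcx
    have hx1 := hx.2
    have hsq := cone_sq_lt d hx
    have hxs : Real.sqrt (∑ i : Fin d, x i.castSucc ^ 2) ≤ x (Fin.last d) := by
      have := Real.sqrt_le_sqrt hsq.le
      rwa [Real.sqrt_sq hx1.le] at this
    -- inner product bound
    have hcs := Finset.sum_mul_sq_le_sq_mul_sq Finset.univ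
      (fun i : Fin d => x i.castSucc) (fun i : Fin d => η i.castSucc)
    have hib : (∑ i : Fin d, x i.castSucc * η i.castSucc) ≤ x (Fin.last d) * s := by
      have h1 : (∑ i : Fin d, x i.castSucc * η i.castSucc) ≤
          Real.sqrt (∑ i : Fin d, x i.castSucc ^ 2) * s := by
        have hsq2 : (Real.sqrt (∑ i : Fin d, x i.castSucc ^ 2) * s) ^ 2 =
            (∑ i : Fin d, x i.castSucc ^ 2) * (∑ i : Fin d, η i.castSucc ^ 2) := by
          rw [mul_pow, Real.sq_sqrt (Finset.sum_nonneg fun i _ => sq_nonneg _),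
            hs, Real.sq_sqrt (Finset.sum_nonneg fun i _ => sq_nonneg _)]
        have hprodnn : 0 ≤ Real.sqrt (∑ i : Fin d, x i.castSucc ^ 2) * s :=
          mul_nonneg (Real.sqrt_nonneg _) hsnn
        nlinarith [hcs]
      calc (∑ i : Fin d, x i.castSucc * η i.castSucc) ≤ _ := h1
        _ ≤ x (Fin.last d) * s := by apply mul_le_mul_of_nonneg_right hxs hsnn
    have hlast : x (Fin.last d) ≤ M := by
      have : c ≤ x (Fin.last d) * s - x (Fin.last d) * η (Fin.last d) := by
        simp only [mink] at hcx; linarith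
      rw [hM, le_div_iff_of_neg (by linarith : s - η (Fin.last d) < 0)]
      nlinarith
    refine ⟨hlast, fun i => ?_⟩
    refine Fin.lastCases ?_ ?_ i
    · rwa [abs_of_pos hx1]
    · intro j
      have h1 : x j.castSucc ^ 2 ≤ ∑ i : Fin d, x i.castSucc ^ 2 :=
        Finset.single_le_sum (f := fun i : Fin d => x i.castSucc ^ 2)
          (fun i _ => sq_nonneg _) (Finset.mem_univ j)
      have hsq2 : x j.castSucc ^ 2 ≤ M ^ 2 := by nlinarith
      exact abs_le.mpr (abs_le_of_sq_le_sq' hsq2 hMpos.le)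
  -- compactness
  have hcont : Continuous fun x : Fin (d+1) → ℝ => mink d x η := by
    simp only [mink]
    fun_prop
  set S := K ∩ {x | c ≤ mink d x η} with hS
  have hSclosed : IsClosed S := hKc.inter (isClosed_le continuous_const hcont)
  have hSsub : S ⊆ Set.pi Set.univ (fun _ : Fin (d+1) => Set.Icc (-M) M) := by
    intro x hx
    intro i _
    have := (key x (hKs hx.1) hx.2).2 i
    exact abs_le.mp this
  have hScomp : IsCompact S :=
    (isCompact_univ_pi fun _ => isCompact_Icc).of_isClosed_subset hSclosed hSsub
  have hSne : S.Nonempty := ⟨x₀, hx₀, le_refl c⟩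
  obtain ⟨x, hxS, hxmax⟩ := hScomp.exists_isMaxOn hSne hcont.continuousOn
  have hmax : ∀ y ∈ K, mink d y η ≤ mink d x η := by
    intro y hy
    by_cases h : c ≤ mink d y η
    · exact hxmax ⟨hy, h⟩
    · have := hxmax hSne.choose_spec
      push_neg at h
      have hcx : c ≤ mink d x η := hxS.2
      linarith
  exact ⟨x, hxS.1, hmax, mink_neg d (hKs hxS.1) hη,
    fun x' hx' hmax' => le_antisymm (hmax x' hx') (hmax' x hxS.1)⟩
end
end

section
/- Let K be a Γ-convex body with extended support function H and let η ∈ 𝓕. The intersection of K with its support plane of inward normal η is a single point p if and only if H is differentiable at η; in that case p = ∇_η H, the gradient of H at η with respect to the Minkowski bilinear form. -/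
open Pointwise

noncomputable section

/-! The support function `H` is the supremum of the linear functions `ζ ↦ ⟨x, ζ⟩₋`, `x ∈ K`.
If `H` is differentiable at `η`, then for every `q` in the face `H - ⟨q, ·⟩₋` has a local minimum
at `η`, so `∇_η H = q`; nondegeneracy of the form makes `q` unique. Conversely, if the face is
`{p}`, then `0 ≤ H ζ - H η - ⟨p, ζ - η⟩₋ ≤ ⟨x_ζ - p, ζ - η⟩₋` for a maximiser `x_ζ` at `ζ`.
By the reverse Cauchy–Schwarz inequality in the future cone the maximisers for `ζ` near `η` stay
in a compact set, and each of their cluster points lies on the face, so `x_ζ → p` and the error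
is `o(ζ - η)`. -/

open Filter Topology

section SupportFunctionDifferentiability

variable {d : ℕ}

section MinkowskiForm

def minkowskiForm (d : ℕ) : (Fin (d+1) → ℝ) →L[ℝ] (Fin (d+1) → ℝ) →L[ℝ] ℝ :=
  LinearMap.toContinuousLinearMap <|
    (LinearMap.toContinuousLinearMap : ((Fin (d+1) → ℝ) →ₗ[ℝ] ℝ) ≃ₗ[ℝ] _).toLinearMap ∘ₗ
      LinearMap.mk₂ ℝ (mink d)
        (fun x y u => by simp only [mink, Pi.add_apply, add_mul, Finset.sum_add_distrib]; ring)
        (fun c x u => by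
          simp only [mink, Pi.smul_apply, smul_eq_mul, mul_assoc, ← Finset.mul_sum]; ring)
        (fun x u v => by simp only [mink, Pi.add_apply, mul_add, Finset.sum_add_distrib]; ring)
        (fun c x u => by
          simp only [mink, Pi.smul_apply, smul_eq_mul, mul_left_comm _ c, ← Finset.mul_sum]; ring)

@[simp] lemma minkowskiForm_apply (x y : Fin (d+1) → ℝ) : minkowskiForm d x y = mink d x y := rfl

lemma mink_sub_left (x y u : Fin (d+1) → ℝ) : mink d (x - y) u = mink d x u - mink d y u := by
  simp only [← minkowskiForm_apply, map_sub, sub_apply]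

lemma mink_sub_right (x u v : Fin (d+1) → ℝ) : mink d x (u - v) = mink d x u - mink d x v := by
  simp only [← minkowskiForm_apply, map_sub]

lemma abs_mink_le (x y : Fin (d+1) → ℝ) : |mink d x y| ≤ ‖minkowskiForm d‖ * ‖x‖ * ‖y‖ :=
  (minkowskiForm d).le_opNorm₂ x y

lemma minkowskiForm_injective : Function.Injective (minkowskiForm d) := by
  refine (injective_iff_map_eq_zero _).2 fun x hx => ?_
  set u : Fin (d+1) → ℝ := Function.update x (Fin.last d) (-x (Fin.last d))
  have hxu : mink d x u = ∑ j, x j ^ 2 := by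
    simp [mink, u, Fin.sum_univ_castSucc, sq]
  have hsq : ∑ j, x j ^ 2 = 0 := by rw [← hxu, ← minkowskiForm_apply, hx]; rfl
  funext j
  simpa using (Finset.sum_eq_zero_iff_of_nonneg fun j _ => sq_nonneg (x j)).1 hsq j
    (Finset.mem_univ j)

end MinkowskiForm

section FutureCone

def spatialNorm (d : ℕ) (x : Fin (d+1) → ℝ) : ℝ := √(∑ i : Fin d, x i.castSucc ^ 2)

lemma spatialNorm_nonneg (x : Fin (d+1) → ℝ) : 0 ≤ spatialNorm d x := Real.sqrt_nonneg _

lemma continuous_spatialNorm : Continuous (spatialNorm d) := by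
  unfold spatialNorm
  fun_prop

lemma abs_apply_castSucc_le_spatialNorm (x : Fin (d+1) → ℝ) (i : Fin d) :
    |x i.castSucc| ≤ spatialNorm d x :=
  Real.abs_le_sqrt <| Finset.single_le_sum (f := fun j : Fin d => x j.castSucc ^ 2)
    (fun _ _ => sq_nonneg _) (Finset.mem_univ i)

lemma mink_self_eq (x : Fin (d+1) → ℝ) :
    mink d x x = spatialNorm d x ^ 2 - x (Fin.last d) ^ 2 := by
  rw [spatialNorm, Real.sq_sqrt (Finset.sum_nonneg fun _ _ => sq_nonneg _)]
  simp only [mink, sq]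

lemma mem_futureCone_iff {x : Fin (d+1) → ℝ} :
    x ∈ FutureCone d ↔ spatialNorm d x < x (Fin.last d) := by
  have h := spatialNorm_nonneg x
  change mink d x x < 0 ∧ 0 < x (Fin.last d) ↔ _
  rw [mink_self_eq]
  constructor
  · rintro ⟨hlt, hpos⟩
    nlinarith
  · intro hlt
    constructor <;> nlinarith

lemma isOpen_futureCone : IsOpen (FutureCone d) := by
  rw [show FutureCone d = {x | spatialNorm d x < x (Fin.last d)} from
    Set.ext fun _ => mem_futureCone_iff]
  exact isOpen_lt continuous_spatialNorm (continuous_apply _)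

lemma norm_eq_apply_last {x : Fin (d+1) → ℝ} (hx : x ∈ FutureCone d) :
    ‖x‖ = x (Fin.last d) := by
  have hx' := mem_futureCone_iff.1 hx
  have hlast : 0 ≤ x (Fin.last d) := (spatialNorm_nonneg x).trans hx'.le
  refine le_antisymm ((pi_norm_le_iff_of_nonneg hlast).2 fun i => ?_) ?_
  · induction i using Fin.lastCases with
    | last => exact (Real.norm_of_nonneg hlast).le
    | cast j => exact (abs_apply_castSucc_le_spatialNorm x j).trans hx'.le
  · exact (le_abs_self _).trans (norm_le_pi_norm x (Fin.last d))

/-- Reverse Cauchy–Schwarz inequality. -/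
lemma mink_le_neg_mul_norm {x : Fin (d+1) → ℝ} (hx : x ∈ FutureCone d) (ζ : Fin (d+1) → ℝ) :
    mink d x ζ ≤ -((ζ (Fin.last d) - spatialNorm d ζ) * ‖x‖) := by
  have hcs : ∑ i : Fin d, x i.castSucc * ζ i.castSucc ≤ spatialNorm d x * spatialNorm d ζ :=
    Real.sum_mul_le_sqrt_mul_sqrt _ _ _
  have hsp : spatialNorm d x * spatialNorm d ζ ≤ x (Fin.last d) * spatialNorm d ζ :=
    mul_le_mul_of_nonneg_right (mem_futureCone_iff.1 hx).le (spatialNorm_nonneg ζ)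
  rw [norm_eq_apply_last hx, mink]
  linarith

lemma norm_le_of_le_mink {x ζ : Fin (d+1) → ℝ} (hx : x ∈ FutureCone d) (hζ : ζ ∈ FutureCone d)
    {a : ℝ} (ha : a ≤ mink d x ζ) : ‖x‖ ≤ -a / (ζ (Fin.last d) - spatialNorm d ζ) := by
  rw [le_div_iff₀ (sub_pos.2 (mem_futureCone_iff.1 hζ))]
  linarith [mink_le_neg_mul_norm hx ζ]

end FutureCone

lemma IsCompact.tendsto_nhds_of_tendsto_comp {X α : Type*} [TopologicalSpace X] {l : Filter α}
    {C : Set X} {f : X → ℝ} {p : X} {y : α → X} (hC : IsCompact C) (hf : Continuous f)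
    (hp : ∀ q ∈ C, f q = f p → q = p) (hyC : ∀ᶠ a in l, y a ∈ C)
    (hfy : Tendsto (f ∘ y) l (𝓝 (f p))) : Tendsto y l (𝓝 p) := by
  refine hC.tendsto_nhds_of_unique_mapClusterPt hyC fun q hq hqy => hp q hq ?_
  have : (𝓝 (f q) ⊓ 𝓝 (f p)).NeBot :=
    (hqy.continuousAt_comp hf.continuousAt).neBot.mono (inf_le_inf_left _ hfy)
  exact eq_of_nhds_neBot this

section SupportFunction

variable {K : Set (Fin (d+1) → ℝ)} {H : (Fin (d+1) → ℝ) → ℝ}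

lemma exists_mem_mink_eq_of_isLUB (hne : K.Nonempty) (hcl : IsClosed K)
    (hsub : K ⊆ FutureCone d) {ζ : Fin (d+1) → ℝ} (hζ : ζ ∈ FutureCone d) {h : ℝ}
    (hlub : IsLUB ((fun x => mink d x ζ) '' K) h) : ∃ x ∈ K, mink d x ζ = h := by
  obtain ⟨x₀, hx₀⟩ := hne
  set c := ζ (Fin.last d) - spatialNorm d ζ
  have hc : 0 < c := sub_pos.2 (mem_futureCone_iff.1 hζ)
  have hfar : ∀ᶠ x in cocompact _ ⊓ 𝓟 K, mink d x ζ ≤ mink d x₀ ζ := by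
    filter_upwards [mem_inf_of_left (tendsto_norm_cocompact_atTop.eventually_ge_atTop
      (-mink d x₀ ζ / c)), mem_inf_of_right (mem_principal_self K)] with x hx hxK
    have := mink_le_neg_mul_norm (hsub hxK) ζ
    rw [div_le_iff₀ hc] at hx
    linarith
  obtain ⟨x, hxK, hmax⟩ := ((minkowskiForm d).flip ζ).continuous.continuousOn.exists_isMaxOn'
    hcl hx₀ hfar
  refine ⟨x, hxK, (hlub.unique (IsGreatest.isLUB ⟨Set.mem_image_of_mem _ hxK, ?_⟩)).symm⟩
  rintro _ ⟨y, hy, rfl⟩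
  exact hmax hy

lemma tendsto_of_mink_eq_of_face_eq_singleton (hcl : IsClosed K) (hsub : K ⊆ FutureCone d)
    (hH : ∀ ζ ∈ FutureCone d, IsLUB ((fun x => mink d x ζ) '' K) (H ζ))
    {η p : Fin (d+1) → ℝ} (hη : η ∈ FutureCone d) (hp : K ∩ {y | mink d y η = H η} = {p})
    {x : (Fin (d+1) → ℝ) → Fin (d+1) → ℝ} (hxK : ∀ ζ ∈ FutureCone d, x ζ ∈ K)
    (hxH : ∀ ζ ∈ FutureCone d, mink d (x ζ) ζ = H ζ) :
    Tendsto x (𝓝 η) (𝓝 p) := by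
  obtain ⟨hpK, hpη : mink d p η = H η⟩ : p ∈ K ∩ {y | mink d y η = H η} := hp ▸ rfl
  have hcone : ∀ᶠ ζ in 𝓝 η, ζ ∈ FutureCone d := isOpen_futureCone.mem_nhds hη
  set g : (Fin (d+1) → ℝ) → ℝ := fun ζ => -mink d p ζ / (ζ (Fin.last d) - spatialNorm d ζ)
  have hg : ContinuousAt g η :=
    (minkowskiForm d p).continuous.neg.continuousAt.div
      ((continuous_apply _).sub continuous_spatialNorm).continuousAt
      (sub_pos.2 (mem_futureCone_iff.1 hη)).ne'
  set M := g η + 1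
  have hbdd : ∀ᶠ ζ in 𝓝 η, ‖x ζ‖ ≤ M := by
    filter_upwards [hcone, hg.eventually (gt_mem_nhds (lt_add_one (g η)))] with ζ hζ hgζ
    refine (norm_le_of_le_mink (hsub (hxK ζ hζ)) hζ ?_).trans hgζ.le
    rw [hxH ζ hζ]
    exact (hH ζ hζ).1 ⟨p, hpK, rfl⟩
  have hlow : Tendsto (fun ζ => mink d p ζ - ‖minkowskiForm d‖ * M * ‖ζ - η‖) (𝓝 η)
      (𝓝 (H η)) := by
    have : Continuous fun ζ => mink d p ζ - ‖minkowskiForm d‖ * M * ‖ζ - η‖ :=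
      (minkowskiForm d p).continuous.sub (by fun_prop)
    simpa [hpη] using this.tendsto η
  have hmax : Tendsto (fun ζ => mink d (x ζ) η) (𝓝 η) (𝓝 (H η)) := by
    refine tendsto_of_tendsto_of_tendsto_of_le_of_le' hlow tendsto_const_nhds ?_ ?_
    · filter_upwards [hcone, hbdd] with ζ hζ hxζ
      have hpx : mink d p ζ ≤ mink d (x ζ) ζ := hxH ζ hζ ▸ (hH ζ hζ).1 ⟨p, hpK, rfl⟩
      have hdiff := (abs_le.1 (abs_mink_le (x ζ) (ζ - η))).2
      have hM : ‖minkowskiForm d‖ * ‖x ζ‖ * ‖ζ - η‖ ≤ ‖minkowskiForm d‖ * M * ‖ζ - η‖ := by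
        gcongr
      rw [mink_sub_right] at hdiff
      linarith
    · filter_upwards [hcone] with ζ hζ
      exact (hH η hη).1 ⟨x ζ, hxK ζ hζ, rfl⟩
  refine ((isCompact_closedBall 0 M).inter_left hcl).tendsto_nhds_of_tendsto_comp
    ((minkowskiForm d).flip η).continuous (fun q hq hqη => ?_) ?_ ?_
  · exact hp.subset ⟨hq.1, hqη.trans hpη⟩
  · filter_upwards [hcone, hbdd] with ζ hζ hxζ
    exact ⟨hxK ζ hζ, mem_closedBall_zero_iff.2 hxζ⟩
  · show Tendsto (fun ζ => mink d (x ζ) η) (𝓝 η) (𝓝 (mink d p η))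
    rwa [hpη]

lemma hasFDerivAt_of_face_eq_singleton (hne : K.Nonempty) (hcl : IsClosed K)
    (hsub : K ⊆ FutureCone d)
    (hH : ∀ ζ ∈ FutureCone d, IsLUB ((fun x => mink d x ζ) '' K) (H ζ))
    {η p : Fin (d+1) → ℝ} (hη : η ∈ FutureCone d) (hp : K ∩ {y | mink d y η = H η} = {p}) :
    HasFDerivAt H (minkowskiForm d p) η := by
  obtain ⟨hpK, hpη : mink d p η = H η⟩ : p ∈ K ∩ {y | mink d y η = H η} := hp ▸ rfl
  choose! x hxK hxH using fun ζ (hζ : ζ ∈ FutureCone d) =>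
    exists_mem_mink_eq_of_isLUB hne hcl hsub hζ (hH ζ hζ)
  have hxp : Tendsto (fun ζ => ‖minkowskiForm d‖ * ‖x ζ - p‖) (𝓝 η) (𝓝 0) := by
    simpa using ((tendsto_of_mink_eq_of_face_eq_singleton hcl hsub hH hη hp hxK hxH).sub_const
      p).norm.const_mul ‖minkowskiForm d‖
  refine HasFDerivAt.of_isLittleO (Asymptotics.isLittleO_iff.2 fun c hc => ?_)
  filter_upwards [isOpen_futureCone.mem_nhds hη, hxp.eventually (ge_mem_nhds hc)] with ζ hζ hxζ
  -- `H` lies above its supporting hyperplane through `p`, and below the one through `x ζ`.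
  have hlow : 0 ≤ H ζ - H η - mink d p (ζ - η) := by
    rw [mink_sub_right, hpη]
    linarith [(hH ζ hζ).1 ⟨p, hpK, rfl⟩]
  have hup : H ζ - H η - mink d p (ζ - η) ≤ mink d (x ζ - p) (ζ - η) := by
    rw [mink_sub_left, mink_sub_right, mink_sub_right, hxH ζ hζ]
    linarith [(hH η hη).1 ⟨x ζ, hxK ζ hζ, rfl⟩]
  calc ‖H ζ - H η - minkowskiForm d p (ζ - η)‖ = |H ζ - H η - mink d p (ζ - η)| := rfl
    _ ≤ |mink d (x ζ - p) (ζ - η)| := abs_le_abs_of_nonneg hlow hup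
    _ ≤ ‖minkowskiForm d‖ * ‖x ζ - p‖ * ‖ζ - η‖ := abs_mink_le _ _
    _ ≤ c * ‖ζ - η‖ := by gcongr

lemma eq_minkowskiForm_of_hasFDerivAt
    (hH : ∀ ζ ∈ FutureCone d, IsLUB ((fun x => mink d x ζ) '' K) (H ζ))
    {η q : Fin (d+1) → ℝ} (hη : η ∈ FutureCone d) {L : (Fin (d+1) → ℝ) →L[ℝ] ℝ}
    (hL : HasFDerivAt H L η) (hqK : q ∈ K) (hqη : mink d q η = H η) :
    L = minkowskiForm d q := by
  have hmin : IsLocalMin (fun ζ => H ζ - minkowskiForm d q ζ) η := by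
    filter_upwards [isOpen_futureCone.mem_nhds hη] with ζ hζ
    simp only [minkowskiForm_apply, hqη, sub_self]
    exact sub_nonneg.2 ((hH ζ hζ).1 ⟨q, hqK, rfl⟩)
  exact sub_eq_zero.1 (hmin.hasFDerivAt_eq_zero (hL.sub (minkowskiForm d q).hasFDerivAt))

end SupportFunction

end SupportFunctionDifferentiability

theorem stmt14_general (d : ℕ) (Γ : Subgroup ((Fin (d+1) → ℝ) ≃ₗ[ℝ] (Fin (d+1) → ℝ)))
    (K : Set (Fin (d+1) → ℝ))
    (hK : IsFuchsianConvexBody d Γ K) (H : (Fin (d+1) → ℝ) → ℝ)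
    (hH : ∀ η ∈ FutureCone d, IsLUB ((fun x => mink d x η) '' K) (H η))
    (η : Fin (d+1) → ℝ) (hη : η ∈ FutureCone d) :
    ((∃ p, K ∩ {y | mink d y η = H η} = {p}) ↔
      DifferentiableWithinAt ℝ H (FutureCone d) η) ∧
    ∀ p, K ∩ {y | mink d y η = H η} = {p} →
      ∀ u, mink d p u = fderivWithin ℝ H (FutureCone d) η u := by
  have hcone : FutureCone d ∈ 𝓝 η := isOpen_futureCone.mem_nhds hη
  have hderiv (p) (hp : K ∩ {y | mink d y η = H η} = {p}) :
      HasFDerivAt H (minkowskiForm d p) η :=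
    hasFDerivAt_of_face_eq_singleton hK.nonempty hK.isClosed hK.subset hH hη hp
  refine ⟨⟨fun ⟨p, hp⟩ => (hderiv p hp).differentiableAt.differentiableWithinAt, fun hdiff => ?_⟩,
    fun p hp u => ?_⟩
  · obtain ⟨p, hpK, hpη⟩ :=
      exists_mem_mink_eq_of_isLUB hK.nonempty hK.isClosed hK.subset hη (hH η hη)
    have hL := hdiff.hasFDerivWithinAt.hasFDerivAt hcone
    refine ⟨p, Set.eq_singleton_iff_unique_mem.2 ⟨⟨hpK, hpη⟩, fun q hq => ?_⟩⟩
    exact minkowskiForm_injective <|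
      (eq_minkowskiForm_of_hasFDerivAt hH hη hL hq.1 hq.2).symm.trans
        (eq_minkowskiForm_of_hasFDerivAt hH hη hL hpK hpη)
  · rw [fderivWithin_of_mem_nhds hcone, (hderiv p hp).fderiv]
    rfl

/-- The intersection of a Γ-convex body K with its support plane of inward normal η is
a single point iff the support function H is differentiable at η, and in that case the
point is the Minkowski gradient of H at η. -/
theorem stmt14 (d : ℕ) (Γ : Subgroup ((Fin (d+1) → ℝ) ≃ₗ[ℝ] (Fin (d+1) → ℝ)))
    (hΓ : IsFuchsian d Γ) (K : Set (Fin (d+1) → ℝ))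
    (hK : IsFuchsianConvexBody d Γ K) (H : (Fin (d+1) → ℝ) → ℝ)
    (hH : ∀ η ∈ FutureCone d, IsLUB ((fun x => mink d x η) '' K) (H η))
    (η : Fin (d+1) → ℝ) (hη : η ∈ FutureCone d) :
    ((∃ p, K ∩ {y | mink d y η = H η} = {p}) ↔
      DifferentiableWithinAt ℝ H (FutureCone d) η) ∧
    ∀ p, K ∩ {y | mink d y η = H η} = {p} →
      ∀ u, mink d p u = fderivWithin ℝ H (FutureCone d) η u :=
  stmt14_general d Γ K hK H hH η hη
end
end
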